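/- arXiv:2211.01220 — 2 statements merged into one kernel-verified Lean document; each statement's English description precedes it below -/
import Mathlib

section
/- Let K ≥ 1 and L > 0. Suppose (Z_k)_{k∈[K]} and (Z_k^n)_{n∈[K],k∈[K]} are jointly distributed finitely-valued random variables such that (i) H(Z_k^1, …, Z_k^K | Z_k) = 0 for every k ∈ [K], (ii) H(Z_k^n) = L for all n, k ∈ [K], and (iii) for every n ∈ [K] the family (Z_1^n, …, Z_K^n) is (K,n)-MDS with symbol size L. Then (1/K)·Σ_{k∈[K]} H(Z_k) ≥ (1 + 1/2 + ⋯ + 1/K)·L. In particular, if every Z_k takes values in a set of size at most 2^{L_Z} (so H(Z_k) ≤ L_Z), then the rate R_Z = L_Z/L satisfies R_Z ≥ 1 + 1/2 + ⋯ + 1/K (converse part of Theorem 1). -/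
open scoped BigOperators

open Classical in
/-- The probability that the finitely-valued random variable `X` takes the value `s`,
under the probability weights `μ` on the finite sample space `Ω`. -/
noncomputable def probOf {Ω S : Type*} [Fintype Ω] (μ : Ω → ℝ) (X : Ω → S) (s : S) : ℝ :=
  ∑ ω ∈ Finset.univ.filter (fun ω => X ω = s), μ ω

/-- Shannon entropy (in bits) of a finitely-valued random variable. -/
noncomputable def Hent {Ω S : Type*} [Fintype Ω] [Fintype S] (μ : Ω → ℝ) (X : Ω → S) : ℝ :=
  - ∑ s : S, probOf μ X s * Real.logb 2 (probOf μ X s)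

/-- Conditional entropy H(X | Y) (in bits). -/
noncomputable def Hcond {Ω S T : Type*} [Fintype Ω] [Fintype S] [Fintype T]
    (μ : Ω → ℝ) (X : Ω → S) (Y : Ω → T) : ℝ :=
  Hent μ (fun ω => (X ω, Y ω)) - Hent μ Y

/-!
Write `Q m` for the joint entropy of all MDS variables of levels `1, …, m` and
`d k n = H(Z_k^n | Z_k^1, …, Z_k^{n-1})`. By the chain rule
`∑ₙ d k n = H(Z_k^1, …, Z_k^K) ≤ H(Z_k)`. Level `n` is determined by any `n` of its entries, so
adding it to the lower levels costs at most `∑_{k ∈ W} d k n` for every set `W` of `n` users;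
averaging over the `K` cyclic windows gives `K (Q n - Q (n-1)) ≤ n ∑ₖ d k n`. Hence
`∑ₖ H(Z_k) ≥ K ∑ₙ (Q n - Q (n-1)) / n`, and Abel summation with `Q n ≥ n L` (MDS again) bounds
the right-hand side below by `K L (1 + 1/2 + ⋯ + 1/K)`.
-/

open Finset
open Function.Embedding (sectL sectR)

section Distribution

variable {Ω : Type*} [Fintype Ω] (μ : Ω → ℝ)

lemma sum_probOf_mul {S : Type*} [Fintype S] (X : Ω → S) (F : S → ℝ) :
    ∑ s, probOf μ X s * F s = ∑ ω, μ ω * F (X ω) := by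
  classical
  rw [← sum_fiberwise univ X fun ω => μ ω * F (X ω)]
  refine sum_congr rfl fun s _ => ?_
  rw [probOf, sum_mul]
  refine sum_congr (by congr) fun ω hω => ?_
  rw [(mem_filter.1 hω).2]

lemma sum_probOf_comp_mul {S S' : Type*} [Fintype S] [Fintype S'] (X : Ω → S) (f : S → S')
    (F : S' → ℝ) :
    ∑ t, probOf μ (fun ω => f (X ω)) t * F t = ∑ s, probOf μ X s * F (f s) := by
  rw [sum_probOf_mul, sum_probOf_mul μ X]

lemma sum_probOf {S : Type*} [Fintype S] (hμ1 : ∑ ω, μ ω = 1) (X : Ω → S) :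
    ∑ s, probOf μ X s = 1 := by
  simpa [hμ1] using sum_probOf_mul μ X fun _ => 1

lemma probOf_nonneg (hμ0 : ∀ ω, 0 ≤ μ ω) {S : Type*} (X : Ω → S) (s : S) :
    0 ≤ probOf μ X s :=
  sum_nonneg fun ω _ => hμ0 ω

lemma probOf_le_probOf_comp (hμ0 : ∀ ω, 0 ≤ μ ω) {S S' : Type*} (X : Ω → S) (f : S → S')
    (s : S) : probOf μ X s ≤ probOf μ (fun ω => f (X ω)) (f s) := by
  classical
  refine sum_le_sum_of_subset_of_nonneg ?_ fun ω _ _ => hμ0 ω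
  intro ω
  simp only [mem_filter, mem_univ, true_and]
  exact congrArg f

lemma sum_probOf_prod_fst {A C : Type*} [Fintype A] (X : Ω → A) (Y : Ω → C) (c : C) :
    ∑ a, probOf μ (fun ω => (X ω, Y ω)) (a, c) = probOf μ Y c := by
  classical
  rw [probOf, ← sum_fiberwise _ X]
  refine sum_congr rfl fun a _ => ?_
  rw [probOf, filter_filter]
  congr 1
  ext ω
  simp [and_comm]

end Distribution

section Entropy

variable {Ω : Type*} [Fintype Ω] (μ : Ω → ℝ)

lemma Hent_comp_eq_sum {S S' : Type*} [Fintype S] [Fintype S'] (X : Ω → S) (f : S → S') :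
    Hent μ (fun ω => f (X ω)) =
      -∑ s, probOf μ X s * Real.logb 2 (probOf μ (fun ω => f (X ω)) (f s)) := by
  rw [Hent, sum_probOf_comp_mul μ X f fun t => Real.logb 2 (probOf μ (fun ω => f (X ω)) t)]

lemma Hent_comp_le (hμ0 : ∀ ω, 0 ≤ μ ω) {S S' : Type*} [Fintype S] [Fintype S'] (X : Ω → S)
    (f : S → S') : Hent μ (fun ω => f (X ω)) ≤ Hent μ X := by
  rw [Hent_comp_eq_sum, Hent, neg_le_neg_iff]
  refine sum_le_sum fun s _ => ?_
  rcases (probOf_nonneg μ hμ0 X s).eq_or_lt with h | h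
  · simp [← h]
  · exact mul_le_mul_of_nonneg_left
      (Real.logb_le_logb_of_le one_lt_two h (probOf_le_probOf_comp μ hμ0 X f s)) h.le

lemma Hent_of_comp_eq_of_comp (hμ0 : ∀ ω, 0 ≤ μ ω) {S S' : Type*} [Fintype S] [Fintype S']
    {X : Ω → S} {Y : Ω → S'} (f : S → S') (g : S' → S) (hf : ∀ ω, f (X ω) = Y ω)
    (hg : ∀ ω, g (Y ω) = X ω) : Hent μ X = Hent μ Y :=
  le_antisymm (by simpa only [hg] using Hent_comp_le μ hμ0 Y g)
    (by simpa only [hf] using Hent_comp_le μ hμ0 X f)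

lemma Hent_eq_zero_of_subsingleton (hμ1 : ∑ ω, μ ω = 1) {S : Type*} [Fintype S]
    [Subsingleton S] (X : Ω → S) : Hent μ X = 0 := by
  have hX : ∀ s, probOf μ X s = 1 := fun s => by
    simp [probOf, Subsingleton.elim (X _) s, hμ1]
  simp [Hent, hX]

lemma Hcond_of_comp_eq_of_comp_right (hμ0 : ∀ ω, 0 ≤ μ ω) {S T T' : Type*} [Fintype S]
    [Fintype T] [Fintype T'] (X : Ω → S) {Y : Ω → T} {Y' : Ω → T'} (f : T → T') (g : T' → T)
    (hf : ∀ ω, f (Y ω) = Y' ω) (hg : ∀ ω, g (Y' ω) = Y ω) : Hcond μ X Y = Hcond μ X Y' := by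
  rw [Hcond, Hcond, Hent_of_comp_eq_of_comp μ hμ0 f g hf hg,
    Hent_of_comp_eq_of_comp μ hμ0 (X := fun ω => (X ω, Y ω)) (Y := fun ω => (X ω, Y' ω))
      (Prod.map id f) (Prod.map id g)
      (fun ω => by simp [hf]) (fun ω => by simp [hg])]

lemma Hent_le_of_Hcond_eq_zero (hμ0 : ∀ ω, 0 ≤ μ ω) {S T : Type*} [Fintype S] [Fintype T]
    {X : Ω → S} {Y : Ω → T} (h : Hcond μ Y X = 0) : Hent μ Y ≤ Hent μ X := by
  have := Hent_comp_le μ hμ0 (fun ω => (Y ω, X ω)) Prod.fst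
  rw [Hcond] at h
  linarith

end Entropy

section Submodularity

lemma sum_mul_log_div_nonneg {ι : Type*} [Fintype ι] {r q : ι → ℝ} (hr : ∀ i, 0 ≤ r i)
    (hq : ∀ i, 0 ≤ q i) (hrq : ∀ i, 0 < r i → 0 < q i) (hsum : ∑ i, q i ≤ ∑ i, r i) :
    0 ≤ ∑ i, r i * Real.log (r i / q i) := by
  have hterm : ∀ i, r i - q i ≤ r i * Real.log (r i / q i) := fun i => by
    rcases (hr i).eq_or_lt with h | h
    · simp [← h, hq i]
    · have := Real.one_sub_inv_le_log_of_pos (div_pos h (hrq i h))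
      calc r i - q i = r i * (1 - (r i / q i)⁻¹) := by field_simp
        _ ≤ _ := mul_le_mul_of_nonneg_left this h.le
  calc (0 : ℝ) ≤ ∑ i, (r i - q i) := by rw [sum_sub_distrib]; linarith
    _ ≤ _ := sum_le_sum fun i _ => hterm i

variable {Ω : Type*} [Fintype Ω] (μ : Ω → ℝ)

lemma sum_probOf_mul_probOf_div_probOf (hμ1 : ∑ ω, μ ω = 1) {A B C : Type*} [Fintype A]
    [Fintype B] [Fintype C] (X : Ω → A) (Y : Ω → B) (Z : Ω → C) :
    ∑ s : A × B × C, probOf μ (fun ω => (X ω, Z ω)) (s.1, s.2.2) *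
      probOf μ (fun ω => (Y ω, Z ω)) s.2 / probOf μ Z s.2.2 = 1 := by
  calc _ = ∑ c, ∑ a, ∑ b, probOf μ (fun ω => (X ω, Z ω)) (a, c) *
        probOf μ (fun ω => (Y ω, Z ω)) (b, c) / probOf μ Z c := by
        rw [Fintype.sum_prod_type_right, Fintype.sum_prod_type_right]
        exact sum_congr rfl fun c _ => sum_comm
    _ = ∑ c, probOf μ Z c := sum_congr rfl fun c _ => by
        simp_rw [← sum_div, ← mul_sum, ← sum_mul, sum_probOf_prod_fst, mul_self_div_self]
    _ = 1 := sum_probOf μ hμ1 Z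

lemma Hcond_prod_le (hμ0 : ∀ ω, 0 ≤ μ ω) (hμ1 : ∑ ω, μ ω = 1) {A B C : Type*} [Fintype A]
    [Fintype B] [Fintype C] (X : Ω → A) (Y : Ω → B) (Z : Ω → C) :
    Hcond μ X (fun ω => (Y ω, Z ω)) ≤ Hcond μ X Z := by
  set W : Ω → A × B × C := fun ω => (X ω, Y ω, Z ω)
  set r := probOf μ W
  set pZ := probOf μ Z
  set pXZ := probOf μ (fun ω => (X ω, Z ω))
  set pYZ := probOf μ (fun ω => (Y ω, Z ω))
  -- `q` is the law of the coupling of `(X, Z)` and `(Y, Z)` that is conditionally independent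
  -- given `Z`; the claim is Gibbs' inequality for `r` against `q`.
  set q : A × B × C → ℝ := fun s => pXZ (s.1, s.2.2) * pYZ s.2 / pZ s.2.2
  have hYZ : Hent μ (fun ω => (Y ω, Z ω)) = -∑ s, r s * Real.logb 2 (pYZ s.2) :=
    Hent_comp_eq_sum μ W Prod.snd
  have hZ : Hent μ Z = -∑ s, r s * Real.logb 2 (pZ s.2.2) :=
    Hent_comp_eq_sum μ W fun s => s.2.2
  have hXZ : Hent μ (fun ω => (X ω, Z ω)) = -∑ s, r s * Real.logb 2 (pXZ (s.1, s.2.2)) :=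
    Hent_comp_eq_sum μ W fun s => (s.1, s.2.2)
  have hr : ∀ s, 0 ≤ r s := probOf_nonneg μ hμ0 W
  have hpos : ∀ s, 0 < r s → 0 < pZ s.2.2 ∧ 0 < pXZ (s.1, s.2.2) ∧ 0 < pYZ s.2 := fun s h =>
    ⟨h.trans_le (probOf_le_probOf_comp μ hμ0 W (fun s => s.2.2) s),
      h.trans_le (probOf_le_probOf_comp μ hμ0 W (fun s => (s.1, s.2.2)) s),
      h.trans_le (probOf_le_probOf_comp μ hμ0 W Prod.snd s)⟩
  have hlog : ∀ s, r s * Real.logb 2 (r s / q s) = r s * (Real.logb 2 (r s) +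
      Real.logb 2 (pZ s.2.2) - Real.logb 2 (pXZ (s.1, s.2.2)) - Real.logb 2 (pYZ s.2)) := by
    intro s
    rcases (hr s).eq_or_lt with h | h
    · simp [← h]
    · obtain ⟨hZs, hXZs, hYZs⟩ := hpos s h
      rw [Real.logb_div h.ne' (by positivity), Real.logb_div (by positivity) hZs.ne',
        Real.logb_mul hXZs.ne' hYZs.ne']
      ring
  have hgibbs : 0 ≤ ∑ s, r s * Real.logb 2 (r s / q s) := by
    simp_rw [Real.logb, mul_div_assoc', ← sum_div]
    refine div_nonneg (sum_mul_log_div_nonneg hr (fun s => ?_) (fun s h => ?_) ?_)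
      (Real.log_nonneg one_le_two)
    · exact div_nonneg (mul_nonneg (probOf_nonneg μ hμ0 _ _) (probOf_nonneg μ hμ0 _ _))
        (probOf_nonneg μ hμ0 _ _)
    · obtain ⟨hZs, hXZs, hYZs⟩ := hpos s h
      positivity
    · rw [sum_probOf_mul_probOf_div_probOf μ hμ1, sum_probOf μ hμ1]
  simp only [hlog, mul_add, mul_sub, sum_add_distrib, sum_sub_distrib] at hgibbs
  have hW : Hent μ (fun ω => (X ω, Y ω, Z ω)) = -∑ s, r s * Real.logb 2 (r s) := rfl
  rw [Hcond, Hcond, hW, hYZ, hZ, hXZ]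
  linarith

lemma Hcond_le_Hcond_comp_right (hμ0 : ∀ ω, 0 ≤ μ ω) (hμ1 : ∑ ω, μ ω = 1) {S T T' : Type*}
    [Fintype S] [Fintype T] [Fintype T'] (X : Ω → S) (Y : Ω → T) (g : T → T') :
    Hcond μ X Y ≤ Hcond μ X (fun ω : Ω => g (Y ω)) := by
  rw [Hcond_of_comp_eq_of_comp_right μ hμ0 X (fun y => (y, g y)) Prod.fst (fun _ => rfl)
    (fun _ => rfl)]
  exact Hcond_prod_le μ hμ0 hμ1 X Y _

end Submodularity

def jointOn {ι Ω T : Type*} (V : ι → Ω → T) (s : Finset ι) : Ω → s → T := fun ω i => V i ω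

lemma jointOn_map_equivMap_symm {ι κ Ω T : Type*} (V : ι → Ω → T) (e : κ ↪ ι) (s : Finset κ)
    (ω : Ω) (i : s.map e) :
    jointOn (fun k => V (e k)) s ω ((equivMap e s).symm i) = jointOn V (s.map e) ω i :=
  congrArg (V · ω) (congrArg Subtype.val ((equivMap e s).apply_symm_apply i))

section JointOn

variable {ι Ω T : Type*} [DecidableEq ι] [Fintype Ω] [Fintype T] (μ : Ω → ℝ)
  (hμ0 : ∀ ω, 0 ≤ μ ω) (hμ1 : ∑ ω, μ ω = 1) (V : ι → Ω → T)

include hμ0 in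
lemma Hent_jointOn_mono {s t : Finset ι} (h : s ⊆ t) :
    Hent μ (jointOn V s) ≤ Hent μ (jointOn V t) :=
  Hent_comp_le μ hμ0 (jointOn V t) fun x (i : s) => x ⟨i, h i.2⟩

include hμ0 hμ1 in
lemma Hcond_jointOn_anti {S : Type*} [Fintype S] (X : Ω → S) {s t : Finset ι} (h : s ⊆ t) :
    Hcond μ X (jointOn V t) ≤ Hcond μ X (jointOn V s) :=
  Hcond_le_Hcond_comp_right μ hμ0 hμ1 X (jointOn V t) fun x (i : s) => x ⟨i, h i.2⟩

include hμ0 in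
lemma Hent_jointOn_insert (a : ι) (s : Finset ι) :
    Hent μ (jointOn V (insert a s)) = Hent μ (jointOn V s) + Hcond μ (V a) (jointOn V s) := by
  rw [Hcond, add_sub_cancel]
  refine Hent_of_comp_eq_of_comp μ hμ0
    (fun x => (x ⟨a, mem_insert_self a s⟩, fun (i : s) => x ⟨i, mem_insert_of_mem i.2⟩))
    (fun p (i : ↥(insert a s)) =>
      if h : i.1 = a then p.1 else p.2 ⟨i, (mem_insert.1 i.2).resolve_left h⟩)
    (fun _ => rfl) fun ω => funext fun i => ?_
  split_ifs with h
  · simp [jointOn, h]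
  · rfl

include hμ0 in
lemma Hcond_jointOn_of_subset {s t : Finset ι} (h : s ⊆ t) :
    Hcond μ (jointOn V t) (jointOn V s) = Hent μ (jointOn V t) - Hent μ (jointOn V s) := by
  rw [Hcond, Hent_of_comp_eq_of_comp μ hμ0 (X := jointOn V t)
    (fun x => (x, fun (i : s) => x ⟨i, h i.2⟩)) Prod.fst (fun _ => rfl) (fun _ => rfl)]
  rfl

include hμ0 in
lemma Hent_jointOn_union_le (s t : Finset ι) :
    Hent μ (jointOn V (s ∪ t)) ≤ Hent μ (jointOn V s) + Hcond μ (jointOn V t) (jointOn V s) := by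
  rw [Hcond, add_sub_cancel]
  have hpair := Hent_comp_le μ hμ0 (fun ω => (jointOn V t ω, jointOn V s ω))
    fun p (i : ↥(s ∪ t)) =>
      if h : i.1 ∈ s then p.2 ⟨i, h⟩ else p.1 ⟨i, (mem_union.1 i.2).resolve_left h⟩
  convert hpair using 2
  funext ω i
  split_ifs <;> rfl

include hμ0 hμ1 in
lemma Hent_jointOn_union_le_sum (s t : Finset ι) :
    Hent μ (jointOn V (s ∪ t)) ≤ Hent μ (jointOn V s) + ∑ a ∈ t, Hcond μ (V a) (jointOn V s) := by
  induction t using Finset.induction_on with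
  | empty => rw [union_empty, sum_empty, add_zero]
  | insert a t ha ih =>
    rw [union_insert, Hent_jointOn_insert μ hμ0, sum_insert ha]
    have := Hcond_jointOn_anti μ hμ0 hμ1 V (V a) (subset_union_left : s ⊆ s ∪ t)
    linarith

include hμ0 in
lemma Hent_jointOn_map {κ : Type*} [DecidableEq κ] (e : κ ↪ ι) (s : Finset κ) :
    Hent μ (jointOn V (s.map e)) = Hent μ (jointOn (fun k => V (e k)) s) :=
  Hent_of_comp_eq_of_comp μ hμ0 (fun x k => x (equivMap e s k))
    (fun y i => y ((equivMap e s).symm i)) (fun _ => rfl)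
    fun ω => funext (jointOn_map_equivMap_symm V e s ω)

include hμ0 in
lemma Hcond_jointOn_map {S : Type*} [Fintype S] (X : Ω → S) {κ : Type*} [DecidableEq κ]
    (e : κ ↪ ι) (s : Finset κ) :
    Hcond μ X (jointOn V (s.map e)) = Hcond μ X (jointOn (fun k => V (e k)) s) :=
  Hcond_of_comp_eq_of_comp_right μ hμ0 X (fun x k => x (equivMap e s k))
    (fun y i => y ((equivMap e s).symm i)) (fun _ => rfl)
    fun ω => funext (jointOn_map_equivMap_symm V e s ω)

end JointOn

section ChainRule

variable {ι Ω T : Type*} [LinearOrder ι] [Fintype Ω] [Fintype T] (μ : Ω → ℝ)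
  (hμ0 : ∀ ω, 0 ≤ μ ω) (hμ1 : ∑ ω, μ ω = 1) (V : ι → Ω → T)

include hμ0 hμ1 in
lemma Hent_jointOn_eq_sum_Hcond (s : Finset ι) :
    Hent μ (jointOn V s) = ∑ i ∈ s, Hcond μ (V i) (jointOn V (s.filter (· < i))) := by
  induction s using Finset.induction_on_max with
  | empty => rw [sum_empty]; exact Hent_eq_zero_of_subsingleton μ hμ1 _
  | insert a s ha ih =>
    rw [Hent_jointOn_insert μ hμ0, ih, sum_insert fun h => lt_irrefl a (ha a h), filter_insert,
      if_neg (lt_irrefl a), filter_true_of_mem ha, add_comm]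
    congr 1
    refine sum_congr rfl fun i hi => ?_
    rw [filter_insert, if_neg (not_lt.2 (ha i hi).le)]

end ChainRule

lemma harmonic_mul_le_sum_div {L : ℝ} {Q : ℕ → ℝ} (hQ0 : Q 0 = 0) {N : ℕ}
    (hQ : ∀ m, 1 ≤ m → m ≤ N → m * L ≤ Q m) :
    (∑ i ∈ range N, 1 / ((i : ℝ) + 1)) * L ≤
      ∑ n ∈ range N, (Q (n + 1) - Q n) / ((n : ℝ) + 1) := by
  have slack_nonneg : ∀ M ≤ N, 0 ≤ (Q M - M * L) / M := fun M hM => by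
    rcases M.eq_zero_or_pos with rfl | hpos
    · simp
    · exact div_nonneg (sub_nonneg.2 (hQ M hpos hM)) M.cast_nonneg
  -- Abel summation, carrying along the nonnegative slack `(Q M - M L) / M`
  have abel : ∀ M ≤ N, (∑ i ∈ range M, 1 / ((i : ℝ) + 1)) * L + (Q M - M * L) / M ≤
      ∑ n ∈ range M, (Q (n + 1) - Q n) / ((n : ℝ) + 1) := by
    intro M
    induction M with
    | zero => simp
    | succ M ih =>
      intro hM
      have hslack : (Q M - M * L) / (M + 1) ≤ (Q M - M * L) / M := by
        rcases M.eq_zero_or_pos with rfl | hpos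
        · simp [hQ0]
        · exact div_le_div_of_nonneg_left (sub_nonneg.2 (hQ M hpos (by omega))) (by positivity)
            (by linarith)
      have hsplit : (Q (M + 1) - ((M + 1 : ℕ) : ℝ) * L) / ((M + 1 : ℕ) : ℝ) =
          (Q M - M * L) / (M + 1) + (Q (M + 1) - Q M) / (M + 1) - 1 / ((M : ℝ) + 1) * L := by
        push_cast
        field_simp
        ring
      rw [sum_range_succ, sum_range_succ, hsplit, add_mul]
      linarith [ih (by omega)]
  linarith [abel N le_rfl, slack_nonneg N le_rfl]

lemma natCast_mul_le_mul_sum_of_le_sum_of_card_eq {K m : ℕ} [NeZero K] (hm : m ≤ K)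
    (f : Fin K → ℝ) {x : ℝ} (h : ∀ W : Finset (Fin K), W.card = m → x ≤ ∑ k ∈ W, f k) :
    K * x ≤ m * ∑ k, f k := by
  -- average over the `K` cyclic windows `{j, …, j + m - 1}`, which cover each point `m` times
  let window (j : Fin K) : Fin m ↪ Fin K := (Fin.castLEEmb hm).trans (addLeftEmbedding j)
  calc (K : ℝ) * x = ∑ _j : Fin K, x := by simp
    _ ≤ ∑ j, ∑ k ∈ univ.map (window j), f k :=
        sum_le_sum fun j _ => h _ (by rw [card_map, card_univ, Fintype.card_fin])
    _ = ∑ j, ∑ i : Fin m, f (j + Fin.castLE hm i) := by simp only [sum_map]; rfl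
    _ = ∑ i : Fin m, ∑ k, f k := by
        rw [sum_comm]
        exact sum_congr rfl fun i _ =>
          Fintype.sum_equiv (Equiv.addRight (Fin.castLE hm i)) _ _ fun _ => rfl
    _ = m * ∑ k, f k := by simp

def IsMDS {ι Ω T : Type*} [DecidableEq ι] [Fintype Ω] [Fintype T] (μ : Ω → ℝ)
    (F : ι → Ω → T) (m : ℕ) (L : ℝ) : Prop :=
  ∀ U : Finset ι, Hent μ (jointOn F U) = (min U.card m : ℕ) * L

section Levels

variable {K : ℕ} {Ω T : Type*} [Fintype Ω] [Fintype T] (μ : Ω → ℝ)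
  (hμ0 : ∀ ω, 0 ≤ μ ω) (hμ1 : ∑ ω, μ ω = 1) (ZM : Fin K → Fin K → Ω → T)

noncomputable def entropyBelow (m : ℕ) : ℝ :=
  Hent μ (jointOn (fun p : Fin K × Fin K => ZM p.1 p.2) {p | (p.1 : ℕ) < m})

noncomputable def newInfo (k n : Fin K) : ℝ :=
  Hcond μ (ZM n k) (jointOn (fun l => ZM l k) {l | l < n})

include hμ0 hμ1 in
lemma sum_newInfo_le {S : Type*} [Fintype S] (k : Fin K) (X : Ω → S)
    (hX : Hcond μ (fun ω n => ZM n k ω) X = 0) : ∑ n, newInfo μ ZM k n ≤ Hent μ X :=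
  calc ∑ n, newInfo μ ZM k n = Hent μ (jointOn (fun l => ZM l k) univ) :=
        (Hent_jointOn_eq_sum_Hcond μ hμ0 hμ1 _ univ).symm
    _ = Hent μ (fun ω n => ZM n k ω) :=
        Hent_of_comp_eq_of_comp μ hμ0 (fun x n => x ⟨n, mem_univ n⟩) (fun y i => y i)
          (fun _ => rfl) (fun _ => rfl)
    _ ≤ Hent μ X := Hent_le_of_Hcond_eq_zero μ hμ0 hX

include hμ1 in
lemma entropyBelow_zero : entropyBelow μ ZM 0 = 0 := by
  rw [entropyBelow, filter_false_of_mem fun p _ => Nat.not_lt_zero _]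
  exact Hent_eq_zero_of_subsingleton μ hμ1 _

section MDS

variable {L : ℝ} (hMDS : ∀ n : Fin K, IsMDS μ (ZM n) (n + 1) L)
include hμ0 hMDS

lemma Hent_jointOn_level (n : Fin K) (U : Finset (Fin K)) :
    Hent μ (jointOn (fun p : Fin K × Fin K => ZM p.1 p.2) (U.map (sectR n (Fin K)))) =
      (min U.card (n + 1) : ℕ) * L :=
  (Hent_jointOn_map μ hμ0 _ _ U).trans (hMDS n U)

lemma natCast_mul_le_entropyBelow {m : ℕ} (h1 : 1 ≤ m) (h2 : m ≤ K) :
    m * L ≤ entropyBelow μ ZM m := by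
  let n : Fin K := ⟨m - 1, by omega⟩
  have hrow := Hent_jointOn_level μ hμ0 ZM hMDS n univ
  rw [card_univ, Fintype.card_fin, min_eq_right n.2, Nat.sub_add_cancel h1] at hrow
  rw [← hrow]
  refine Hent_jointOn_mono μ hμ0 _ fun p hp => ?_
  obtain ⟨k, -, rfl⟩ := mem_map.1 hp
  simp only [mem_filter, mem_univ, true_and, Function.Embedding.sectR_apply, n]
  omega

include hμ1 in
lemma entropyBelow_succ_sub_le (n : Fin K) {W : Finset (Fin K)} (hW : W.card = n + 1) :
    entropyBelow μ ZM (n + 1) - entropyBelow μ ZM n ≤ ∑ k ∈ W, newInfo μ ZM k n := by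
  set V : Fin K × Fin K → Ω → T := fun p => ZM p.1 p.2
  set A : Finset (Fin K × Fin K) := {p | (p.1 : ℕ) < n}
  set e := sectR n (Fin K)
  -- MDS: the whole level-`n` row is determined by any `n + 1` of its entries
  have hrow : Hcond μ (jointOn V (univ.map e)) (jointOn V (W.map e)) = 0 := by
    rw [Hcond_jointOn_of_subset μ hμ0 V (map_subset_map.2 (subset_univ W)),
      Hent_jointOn_level μ hμ0 ZM hMDS, Hent_jointOn_level μ hμ0 ZM hMDS, card_univ,
      Fintype.card_fin, hW, min_eq_right n.2, min_self, sub_self]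
  have hcover : ({p | (p.1 : ℕ) < n + 1} : Finset _) ⊆ (A ∪ W.map e) ∪ univ.map e := by
    intro p hp
    rcases Nat.lt_succ_iff_lt_or_eq.1 (mem_filter.1 hp).2 with h | h
    · exact mem_union_left _ (mem_union_left _ (mem_filter.2 ⟨mem_univ _, h⟩))
    · exact mem_union_right _ (mem_map.2 ⟨p.2, mem_univ _, Prod.ext (Fin.ext h.symm) rfl⟩)
  have hnew : ∀ k, Hcond μ (V (e k)) (jointOn V A) ≤ newInfo μ ZM k n := fun k =>
    calc Hcond μ (V (e k)) (jointOn V A)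
        ≤ Hcond μ (V (e k)) (jointOn V (({l | l < n} : Finset _).map (sectL _ k))) :=
          Hcond_jointOn_anti μ hμ0 hμ1 V _ fun p hp => by
            obtain ⟨l, hl, rfl⟩ := mem_map.1 hp
            simpa [A] using hl
      _ = newInfo μ ZM k n := Hcond_jointOn_map μ hμ0 V _ _ _
  have h1 := Hent_jointOn_mono μ hμ0 V hcover
  have h2 := Hent_jointOn_union_le μ hμ0 V (A ∪ W.map e) (univ.map e)
  have h3 := Hcond_jointOn_anti μ hμ0 hμ1 V (jointOn V (univ.map e))
    (subset_union_right : W.map e ⊆ A ∪ W.map e)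
  have h4 := Hent_jointOn_union_le_sum μ hμ0 hμ1 V A (W.map e)
  have h5 : ∑ a ∈ W.map e, Hcond μ (V a) (jointOn V A) ≤ ∑ k ∈ W, newInfo μ ZM k n := by
    rw [sum_map]
    exact sum_le_sum fun k _ => hnew k
  rw [entropyBelow, entropyBelow]
  linarith

include hμ1 in
lemma natCast_mul_harmonic_mul_le_sum_Hent [NeZero K] {S : Type*} [Fintype S]
    (Z : Fin K → Ω → S) (hdet : ∀ k, Hcond μ (fun ω n => ZM n k ω) (Z k) = 0) :
    K * ((∑ i ∈ range K, 1 / ((i : ℝ) + 1)) * L) ≤ ∑ k, Hent μ (Z k) := by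
  set Q := entropyBelow μ ZM
  have hlevel : ∀ n : Fin K, K * (Q (n + 1) - Q n) ≤ (n + 1 : ℕ) * ∑ k, newInfo μ ZM k n :=
    fun n => natCast_mul_le_mul_sum_of_le_sum_of_card_eq n.2 _ fun _ hW =>
      entropyBelow_succ_sub_le μ hμ0 hμ1 ZM hMDS n hW
  calc (K : ℝ) * ((∑ i ∈ range K, 1 / ((i : ℝ) + 1)) * L)
      ≤ K * ∑ n ∈ range K, (Q (n + 1) - Q n) / ((n : ℝ) + 1) :=
        mul_le_mul_of_nonneg_left (harmonic_mul_le_sum_div (entropyBelow_zero μ hμ1 ZM)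
          fun _ h1 h2 => natCast_mul_le_entropyBelow μ hμ0 ZM hMDS h1 h2) K.cast_nonneg
    _ = ∑ n : Fin K, K * (Q (n + 1) - Q n) / ((n : ℝ) + 1) := by
        rw [mul_sum, ← Fin.sum_univ_eq_sum_range]
        simp only [mul_div_assoc]
    _ ≤ ∑ n : Fin K, ∑ k, newInfo μ ZM k n := sum_le_sum fun n _ => by
        rw [div_le_iff₀ (by positivity)]
        have := hlevel n
        push_cast at this
        linarith
    _ = ∑ k, ∑ n, newInfo μ ZM k n := sum_comm
    _ ≤ ∑ k, Hent μ (Z k) := sum_le_sum fun k _ => sum_newInfo_le μ hμ0 hμ1 ZM k (Z k) (hdet k)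

end MDS

end Levels

theorem mds_variable_generation_converse_general
    (K : ℕ) (hK : 1 ≤ K) (L : ℝ) (hL : 0 < L)
    (Ω : Type) [Fintype Ω] (μ : Ω → ℝ)
    (hμ0 : ∀ ω, 0 ≤ μ ω) (hμ1 : (∑ ω, μ ω) = 1)
    (S T : Type) [Fintype S] [Fintype T]
    -- `Z k` is the source variable of user `k`; `ZM n k` is the MDS variable `Z_k^n`
    (Z : Fin K → Ω → S) (ZM : Fin K → Fin K → Ω → T)
    -- (i)  H(Z_k^1, …, Z_k^K | Z_k) = 0
    (hdet : ∀ k : Fin K, Hcond μ (fun ω (n : Fin K) => ZM n k ω) (Z k) = 0)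
    -- (iii)  for every n, (Z_1^n, …, Z_K^n) is (K,n)-MDS with symbol size L
    (hMDS : ∀ (n : Fin K) (U : Finset (Fin K)),
      Hent μ (fun ω (u : ↥U) => ZM n u.1 ω) = (min U.card (n.1 + 1) : ℕ) * L) :
    (1 / (K : ℝ)) * ∑ k : Fin K, Hent μ (Z k)
        ≥ (∑ i ∈ Finset.range K, 1 / ((i : ℝ) + 1)) * L ∧
    ∀ LZ : ℝ, (∀ k : Fin K, Hent μ (Z k) ≤ LZ) →
      LZ / L ≥ ∑ i ∈ Finset.range K, 1 / ((i : ℝ) + 1) := by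
  have : NeZero K := ⟨by omega⟩
  have hKpos : (0 : ℝ) < K := by exact_mod_cast hK
  have key := natCast_mul_harmonic_mul_le_sum_Hent μ hμ0 hμ1 ZM hMDS Z hdet
  refine ⟨?_, fun LZ hLZ => ?_⟩
  · rw [ge_iff_le, one_div_mul_eq_div, le_div_iff₀ hKpos]
    linarith
  · have hsum : ∑ k, Hent μ (Z k) ≤ K * LZ := by
      simpa using sum_le_sum fun k (_ : k ∈ univ) => hLZ k
    rw [ge_iff_le, le_div_iff₀ hL]
    exact le_of_mul_le_mul_left (key.trans hsum) hKpos

/-- Converse part of Theorem 1 (MDS variable generation):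
the per-user randomness rate is at least the harmonic number 1 + 1/2 + ⋯ + 1/K. -/
theorem mds_variable_generation_converse
    (K : ℕ) (hK : 1 ≤ K) (L : ℝ) (hL : 0 < L)
    (Ω : Type) [Fintype Ω] (μ : Ω → ℝ)
    (hμ0 : ∀ ω, 0 ≤ μ ω) (hμ1 : (∑ ω, μ ω) = 1)
    (S T : Type) [Fintype S] [Fintype T]
    -- `Z k` is the source variable of user `k`; `ZM n k` is the MDS variable `Z_k^n`
    (Z : Fin K → Ω → S) (ZM : Fin K → Fin K → Ω → T)
    -- (i)  H(Z_k^1, …, Z_k^K | Z_k) = 0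
    (hdet : ∀ k : Fin K, Hcond μ (fun ω (n : Fin K) => ZM n k ω) (Z k) = 0)
    -- (ii)  H(Z_k^n) = L
    (hsize : ∀ n k : Fin K, Hent μ (ZM n k) = L)
    -- (iii)  for every n, (Z_1^n, …, Z_K^n) is (K,n)-MDS with symbol size L
    (hMDS : ∀ (n : Fin K) (U : Finset (Fin K)),
      Hent μ (fun ω (u : ↥U) => ZM n u.1 ω) = (min U.card (n.1 + 1) : ℕ) * L) :
    (1 / (K : ℝ)) * ∑ k : Fin K, Hent μ (Z k)
        ≥ (∑ i ∈ Finset.range K, 1 / ((i : ℝ) + 1)) * L ∧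
    ∀ LZ : ℝ, (∀ k : Fin K, Hent μ (Z k) ≤ LZ) →
      LZ / L ≥ ∑ i ∈ Finset.range K, 1 / ((i : ℝ) + 1) :=
  mds_variable_generation_converse_general K hK L hL Ω μ hμ0 hμ1 S T Z ZM hdet hMDS
end

section
/- Let K ≥ 1 and let q be a prime power with q > K!·Σ_{n=1}^{K} n·binomial(K,n). Then there exist matrices H_k^n ∈ F_q^{(K!/n) × K!} for all k, n ∈ [K], and matrices V_k^{n←m} ∈ F_q^{(K!/n) × (K!/m)} for all k ∈ [K] and 1 ≤ m < n ≤ K, such that for every n ∈ [K] and every subset U = {k_1, …, k_n} ⊆ [K] of size n: (i) for each m ∈ [n−1], the K!×K! matrix obtained by vertically stacking V_{k_1}^{n←m}H_{k_1}^{m}, V_{k_2}^{n←m}H_{k_2}^{m}, …, V_{k_n}^{n←m}H_{k_n}^{m} is invertible, and (ii) the K!×K! matrix obtained by vertically stacking H_{k_1}^{n}, H_{k_2}^{n}, …, H_{k_n}^{n} is invertible. -/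
open scoped BigOperators

/-- Mutual information I(X ; Y) (in bits). -/
noncomputable def MI {Ω S T : Type*} [Fintype Ω] [Fintype S] [Fintype T]
    (μ : Ω → ℝ) (X : Ω → S) (Y : Ω → T) : ℝ :=
  Hent μ X + Hent μ Y - Hent μ (fun ω => (X ω, Y ω))

/-- Conditional mutual information I(X ; Y | Z) (in bits). -/
noncomputable def CMI {Ω S T U : Type*} [Fintype Ω] [Fintype S] [Fintype T] [Fintype U]
    (μ : Ω → ℝ) (X : Ω → S) (Y : Ω → T) (Z : Ω → U) : ℝ :=
  Hcond μ X Z - Hcond μ X (fun ω => (Y ω, Z ω))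

lemma rank_submatrix_equiv {R : Type*} [CommRing R] {k l m n : Type*}
    [Fintype k] [Fintype l] [Fintype m] [Fintype n]
    (A : Matrix k l R) (e₁ : m ≃ k) (e₂ : n ≃ l) :
    (A.submatrix e₁ e₂).rank = A.rank := by
  rw [Matrix.rank, Matrix.rank, Matrix.mulVecLin_submatrix, LinearMap.range_comp,
    LinearMap.range_comp,
    show LinearMap.funLeft R R ⇑e₂.symm = (LinearEquiv.funCongrLeft R R e₂.symm : _) from rfl,
    LinearEquiv.range, Submodule.map_top,
    show LinearMap.funLeft R R ⇑e₁ = (LinearEquiv.funCongrLeft R R e₁ : _) from rfl,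
    LinearEquiv.finrank_map_eq]

lemma rank_stack_vandermonde {F : Type} [Field F] {a b L : ℕ} (h : a * b = L)
    (w : Fin a × Fin b → F) (hw : Function.Injective w) :
    (Matrix.of fun p c => w p ^ (c : ℕ) : Matrix (Fin a × Fin b) (Fin L) F).rank = L := by
  have eqv : Fin L ≃ Fin a × Fin b := ((finProdFinEquiv).trans (finCongr h)).symm
  have heq : (Matrix.of fun p c => w p ^ (c : ℕ) : Matrix (Fin a × Fin b) (Fin L) F)
      = (Matrix.vandermonde (w ∘ eqv)).submatrix eqv.symm (Equiv.refl _) := by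
    ext p c
    simp [Matrix.vandermonde]
  rw [heq, rank_submatrix_equiv, Matrix.rank_of_isUnit, Fintype.card_fin]
  rw [Matrix.isUnit_iff_isUnit_det, isUnit_iff_ne_zero]
  exact Matrix.det_vandermonde_ne_zero_iff.mpr (hw.comp eqv.injective)

/-- Existence of generic matrices for the general MDS variable generation scheme: for
q > K!·Σ_{n∈[K]} n·C(K,n), there exist matrices H_k^n ∈ F_q^{(K!/n)×K!} and
V_k^{n←m} ∈ F_q^{(K!/n)×(K!/m)} such that for every n and every n-subset
U = {k_1,…,k_n} ⊆ [K], all the stacked K!×K! matrices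
[(V_{k_i}^{n←m} H_{k_i}^m)_{i∈[n]}] (m ∈ [n−1]) and [(H_{k_i}^n)_{i∈[n]}] have full rank
(are invertible). Here the level `n : Fin K` represents n+1 ∈ [K], and an n-subset is
given by an injective enumeration `e`. -/
theorem generic_matrices_exist
    (K q : ℕ) (hK : 1 ≤ K) (hq : IsPrimePow q)
    (hbound : K.factorial * (∑ n ∈ Finset.Icc 1 K, n * Nat.choose K n) < q)
    (F : Type) [Field F] [Fintype F] (hF : Fintype.card F = q) :
    ∃ (H : (k : Fin K) → (n : Fin K) →
        Matrix (Fin (K.factorial / (n.1 + 1))) (Fin K.factorial) F)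
      (V : (k : Fin K) → (n : Fin K) → (m : Fin K) →
        Matrix (Fin (K.factorial / (n.1 + 1))) (Fin (K.factorial / (m.1 + 1))) F),
      ∀ (n : Fin K) (e : Fin (n.1 + 1) → Fin K), Function.Injective e →
        (∀ m : Fin K, m < n →
          (Matrix.of fun (p : Fin (n.1 + 1) × Fin (K.factorial / (n.1 + 1)))
              (c : Fin K.factorial) => (V (e p.1) n m * H (e p.1) m) p.2 c).rank
            = K.factorial) ∧
        (Matrix.of fun (p : Fin (n.1 + 1) × Fin (K.factorial / (n.1 + 1)))
            (c : Fin K.factorial) => H (e p.1) n p.2 c).rank = K.factorial := by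
  classical
  set L := K.factorial with hL
  -- an injection Fin K × Fin L ↪ F
  have hKL : K * L ≤ Fintype.card F := by
    rw [hF]
    have h1 : K ≤ ∑ n ∈ Finset.Icc 1 K, n * Nat.choose K n := by
      have := Finset.single_le_sum (f := fun n => n * Nat.choose K n)
        (fun i _ => Nat.zero_le _) (Finset.mem_Icc.mpr ⟨hK, le_refl K⟩)
      simpa using this
    calc K * L = L * K := Nat.mul_comm _ _
      _ ≤ L * ∑ n ∈ Finset.Icc 1 K, n * Nat.choose K n := Nat.mul_le_mul_left _ h1
      _ ≤ q := le_of_lt hbound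
  obtain ⟨ι⟩ : Nonempty (Fin K × Fin L ↪ F) := by
    apply Function.Embedding.nonempty_of_card_le
    simpa using hKL
  have hle : ∀ n : Fin K, L / (n.1 + 1) ≤ L := fun n => Nat.div_le_self _ _
  refine ⟨fun k n => Matrix.of fun i c => (ι (k, Fin.castLE (hle n) i)) ^ (c : ℕ),
    fun k n m => Matrix.of fun i j => if (i : ℕ) = (j : ℕ) then 1 else 0, ?_⟩
  intro n e he
  -- the common node function
  set w : Fin (n.1 + 1) × Fin (L / (n.1 + 1)) → F :=
    fun p => ι (e p.1, Fin.castLE (hle n) p.2) with hw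
  have hwinj : Function.Injective w := by
    intro p p' hpp
    have := ι.injective hpp
    have h1 : e p.1 = e p'.1 := (Prod.mk.injEq _ _ _ _).mp this |>.1
    have h2 : Fin.castLE (hle n) p.2 = Fin.castLE (hle n) p'.2 :=
      (Prod.mk.injEq _ _ _ _).mp this |>.2
    exact Prod.ext (he h1) (Fin.castLE_injective _ h2)
  have hdvd : (n.1 + 1) ∣ L := Nat.dvd_factorial (Nat.succ_pos _) n.2
  have hmul : (n.1 + 1) * (L / (n.1 + 1)) = L := Nat.mul_div_cancel' hdvd
  have key : (Matrix.of fun p c => w p ^ (c : ℕ) :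
      Matrix (Fin (n.1 + 1) × Fin (L / (n.1 + 1))) (Fin L) F).rank = L :=
    rank_stack_vandermonde hmul w hwinj
  constructor
  · intro m hm
    have hmn : L / (n.1 + 1) ≤ L / (m.1 + 1) :=
      Nat.div_le_div_left (Nat.succ_le_succ (le_of_lt hm)) (Nat.succ_pos _)
    have heq : (Matrix.of fun (p : Fin (n.1 + 1) × Fin (L / (n.1 + 1))) (c : Fin L) =>
        (((Matrix.of fun i j => if (i : ℕ) = (j : ℕ) then (1:F) else 0 :
            Matrix (Fin (L / (n.1 + 1))) (Fin (L / (m.1 + 1))) F)) *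
          ((Matrix.of fun i c => (ι (e p.1, Fin.castLE (hle m) i)) ^ (c : ℕ) :
            Matrix (Fin (L / (m.1 + 1))) (Fin L) F))) p.2 c)
        = (Matrix.of fun p c => w p ^ (c : ℕ) :
            Matrix (Fin (n.1 + 1) × Fin (L / (n.1 + 1))) (Fin L) F) := by
      ext p c
      simp only [Matrix.of_apply, Matrix.mul_apply]
      rw [Finset.sum_eq_single (Fin.castLE hmn p.2)]
      · have hcast : Fin.castLE (hle m) (Fin.castLE hmn p.2) = Fin.castLE (hle n) p.2 := rfl
        simp only [Matrix.of_apply, Fin.coe_castLE, if_pos rfl, one_mul, hcast, hw, if_true]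
      · intro j _ hj
        have : ¬ ((p.2 : ℕ) = (j : ℕ)) := by
          intro hc
          exact hj (Fin.ext hc.symm)
        simp [Matrix.of_apply, this]
      · intro hmem
        exact absurd (Finset.mem_univ _) hmem
    rw [heq]
    exact key
  · exact key
end
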